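/- arXiv:2005.00600 — 2 statements merged into one kernel-verified Lean document; each statement's English description precedes it below -/
import Mathlib

section
/- Suppose τ ⊂ λ are partitions such that (τ,λ) is a δ-pair with the strip λ/τ in row i, for some i ≥ 2. Then there exists a partition μ ⊂ τ such that (μ,τ) is a δ-pair with the strip τ/μ in row i-1, and moreover λ/μ is a skew hook. -/
/-- `(μ,λ)` is a `δ`-pair: `μ ⊆ λ`, the skew diagram `λ/μ` is a (nonempty)
horizontal strip (all boxes in one row), and its right-most box has content
`δ - |μ|` (contents are integral, so `δ` is taken in `ℤ`). -/
def IsDeltaPair (δ : ℤ) (mu lam : YoungDiagram) : Prop :=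
  mu ≤ lam ∧
  (∃ r0 : ℕ, ∀ c ∈ lam.cells \ mu.cells, c.1 = r0) ∧
  ∃ b ∈ lam.cells \ mu.cells,
    (∀ c ∈ lam.cells \ mu.cells, c.2 ≤ b.2) ∧
    (b.2 : ℤ) - (b.1 : ℤ) = δ - (mu.card : ℤ)

/-- A finite set of boxes is a skew hook if its multiset of contents is
`{x, x+1, …, y}` for some integers `x ≤ y`, each content appearing exactly
once. -/
def IsSkewHook (s : Finset (ℕ × ℕ)) : Prop :=
  ∃ x y : ℤ, x ≤ y ∧
    s.image (fun c => (c.2 : ℤ) - (c.1 : ℤ)) = Finset.Icc x y ∧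
    s.card = (Finset.Icc x y).card

/-- If `(τ,λ)` is a `δ`-pair whose strip `λ/τ` lies in row `i` (1-indexed) for
some `i ≥ 2`, then there exists `μ ⊆ τ` such that `(μ,τ)` is a `δ`-pair whose
strip `τ/μ` lies in row `i-1`, and moreover `λ/μ` is a skew hook. -/
theorem deltaPair_step_down (δ : ℤ) (tau lam : YoungDiagram) (i : ℕ) (hi : 2 ≤ i)
    (hpair : IsDeltaPair δ tau lam)
    (hrow : ∀ b ∈ lam.cells \ tau.cells, b.1 = i - 1) :
    ∃ mu : YoungDiagram, mu ≤ tau ∧ IsDeltaPair δ mu tau ∧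
      (∀ b ∈ tau.cells \ mu.cells, b.1 = i - 2) ∧
      IsSkewHook (lam.cells \ mu.cells) := by
  obtain ⟨hsub, ⟨r0, hr0⟩, b, hbmem, hbmax, hbc⟩ := hpair
  set r := i - 1 with hr
  have hi2 : i - 2 = r - 1 := by omega
  have hr1 : 1 ≤ r := by omega
  set T := tau.rowLen r with hT
  set L := lam.rowLen r with hL
  set P := tau.rowLen (r - 1) with hP
  have hb1 : b.1 = r := hrow b hbmem
  obtain ⟨hblam, hbtau⟩ := Finset.mem_sdiff.mp hbmem
  have hbL : b.2 < L := by
    have h := YoungDiagram.mem_iff_lt_rowLen.mp (show (b.1, b.2) ∈ lam from hblam)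
    rw [hb1] at h
    exact h
  have hbT : T ≤ b.2 := by
    by_contra h
    push_neg at h
    refine hbtau ?_
    rw [YoungDiagram.mem_cells]
    show (b.1, b.2) ∈ tau
    rw [YoungDiagram.mem_iff_lt_rowLen, hb1]
    exact h
  have hTL : T < L := lt_of_le_of_lt hbT hbL
  have hL1 : 1 ≤ L := by omega
  have hrmem : (r, L - 1) ∈ lam.cells \ tau.cells := by
    rw [Finset.mem_sdiff]
    constructor
    · rw [YoungDiagram.mem_cells, YoungDiagram.mem_iff_lt_rowLen]
      omega
    · rw [YoungDiagram.mem_cells, YoungDiagram.mem_iff_lt_rowLen]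
      omega
  have hb2 : b.2 = L - 1 := le_antisymm (by omega) (hbmax _ hrmem)
  have hδ : δ = (tau.card : ℤ) + (L : ℤ) - 1 - (r : ℤ) := by
    rw [hb1, hb2] at hbc
    omega
  have hrowEq : ∀ j : ℕ, (r - 1, j) ∈ lam ↔ (r - 1, j) ∈ tau := by
    intro j
    constructor
    · intro h
      by_contra h'
      have hm : ((r - 1, j) : ℕ × ℕ) ∈ lam.cells \ tau.cells := Finset.mem_sdiff.mpr ⟨h, h'⟩
      have h2 : ((r - 1, j) : ℕ × ℕ).1 = r := hrow _ hm
      have h3 : r - 1 = r := h2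
      omega
    · intro h
      exact hsub h
  have hLP : L ≤ P := by
    have h1 : ((r - 1, L - 1) : ℕ × ℕ) ∈ lam :=
      lam.up_left_mem (by omega) (le_refl _) (Finset.mem_sdiff.mp hrmem).1
    have h2 := YoungDiagram.mem_iff_lt_rowLen.mp ((hrowEq (L - 1)).mp h1)
    omega
  have hTP : T ≤ P := tau.rowLen_anti (r - 1) r (by omega)
  have hP1 : 1 ≤ P := le_trans hL1 hLP
  -- define mu
  have hlower : IsLowerSet ((tau.cells.filter (fun c => c.1 ≠ r - 1 ∨ c.2 < L - 1)) :
      Set (ℕ × ℕ)) := by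
    intro c1 c2 hle hc1
    simp only [Finset.coe_filter, Set.mem_setOf_eq, Finset.mem_coe,
      YoungDiagram.mem_cells] at hc1 ⊢
    obtain ⟨hc1t, hc1d⟩ := hc1
    refine ⟨tau.isLowerSet hle hc1t, ?_⟩
    obtain ⟨h21, h22⟩ := hle
    by_contra h
    push_neg at h
    obtain ⟨he, hge⟩ := h
    rcases hc1d with h' | h'
    · have hc1r : r ≤ c1.1 := by
        rw [he] at h21
        omega
      have hmem : ((r, L - 1) : ℕ × ℕ) ∈ tau :=
        tau.up_left_mem hc1r (le_trans hge h22) (show (c1.1, c1.2) ∈ tau from hc1t)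
      have := YoungDiagram.mem_iff_lt_rowLen.mp hmem
      omega
    · have : c2.2 ≤ c1.2 := h22
      omega
  set mu : YoungDiagram := ⟨tau.cells.filter (fun c => c.1 ≠ r - 1 ∨ c.2 < L - 1), hlower⟩
    with hmu
  have hmusub : mu ≤ tau := fun c hc => (Finset.mem_filter.mp hc).1
  -- characterization of tau \ mu
  have hB : ∀ c : ℕ × ℕ, c ∈ tau.cells \ mu.cells ↔
      (c.1 = r - 1 ∧ L - 1 ≤ c.2 ∧ c.2 < P) := by
    rintro ⟨a, j⟩
    constructor
    · intro h
      obtain ⟨ht, hm⟩ := Finset.mem_sdiff.mp h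
      have hm' : ¬ ((a, j) ∈ tau.cells ∧ (a ≠ r - 1 ∨ j < L - 1)) := fun hh =>
        hm (Finset.mem_filter.mpr hh)
      have hPa := YoungDiagram.mem_iff_lt_rowLen.mp (show ((a, j) : ℕ × ℕ) ∈ tau from ht)
      by_cases ha : a = r - 1
      · subst ha
        refine ⟨rfl, ?_, hPa⟩
        by_contra hj
        push_neg at hj
        exact hm' ⟨ht, Or.inr hj⟩
      · exact absurd ⟨ht, Or.inl ha⟩ hm'
    · rintro ⟨ha, hj, hjP⟩
      have ha' : a = r - 1 := ha
      have hj' : L - 1 ≤ j := hj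
      have hjP' : j < P := hjP
      have ht : ((a, j) : ℕ × ℕ) ∈ tau := by
        rw [YoungDiagram.mem_iff_lt_rowLen, ha']
        exact hjP'
      refine Finset.mem_sdiff.mpr ⟨ht, ?_⟩
      intro hmem
      rcases (Finset.mem_filter.mp hmem).2 with h | h
      · exact h ha'
      · have : j < L - 1 := h
        omega
  -- characterization of lam \ tau
  have hA : ∀ c : ℕ × ℕ, c ∈ lam.cells \ tau.cells ↔
      (c.1 = r ∧ T ≤ c.2 ∧ c.2 < L) := by
    rintro ⟨a, j⟩
    constructor
    · intro h
      have ha : a = r := hrow _ h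
      obtain ⟨hl, ht⟩ := Finset.mem_sdiff.mp h
      have h1 : j < lam.rowLen a :=
        YoungDiagram.mem_iff_lt_rowLen.mp (show ((a, j) : ℕ × ℕ) ∈ lam from hl)
      rw [ha] at h1
      have h2 : T ≤ j := by
        by_contra h'
        push_neg at h'
        refine ht ?_
        rw [YoungDiagram.mem_cells]
        show ((a, j) : ℕ × ℕ) ∈ tau
        rw [YoungDiagram.mem_iff_lt_rowLen, ha]
        exact h'
      exact ⟨ha, h2, h1⟩
    · rintro ⟨ha, hTj, hjL⟩
      have ha' : a = r := ha
      have hTj' : T ≤ j := hTj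
      have hjL' : j < L := hjL
      rw [Finset.mem_sdiff]
      constructor
      · rw [YoungDiagram.mem_cells]
        show ((a, j) : ℕ × ℕ) ∈ lam
        rw [YoungDiagram.mem_iff_lt_rowLen, ha']
        exact hjL'
      · rw [YoungDiagram.mem_cells]
        show ¬ ((a, j) : ℕ × ℕ) ∈ tau
        rw [YoungDiagram.mem_iff_lt_rowLen, ha']
        omega
  have hC : lam.cells \ mu.cells = (lam.cells \ tau.cells) ∪ (tau.cells \ mu.cells) := by
    ext c
    simp only [Finset.mem_sdiff, Finset.mem_union]
    constructor
    · rintro ⟨hl, hm⟩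
      by_cases ht : c ∈ tau.cells
      · exact Or.inr ⟨ht, hm⟩
      · exact Or.inl ⟨hl, ht⟩
    · rintro (⟨hl, ht⟩ | ⟨ht, hm⟩)
      · exact ⟨hl, fun hm => ht (hmusub hm)⟩
      · exact ⟨hsub ht, hm⟩
  have hdisj : Disjoint (lam.cells \ tau.cells) (tau.cells \ mu.cells) := by
    rw [Finset.disjoint_left]
    intro c hc1 hc2
    have h1 := (hA c).mp hc1
    have h2 := (hB c).mp hc2
    omega
  have hcard1 : (lam.cells \ tau.cells).card = L - T := by
    have he : lam.cells \ tau.cells = (Finset.Icc T (L - 1)).image (fun j => (r, j)) := by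
      ext c
      rw [hA]
      simp only [Finset.mem_image, Finset.mem_Icc]
      constructor
      · rintro ⟨h1, h2, h3⟩
        exact ⟨c.2, ⟨h2, by omega⟩, by rw [← h1]⟩
      · rintro ⟨j, ⟨hj1, hj2⟩, rfl⟩
        exact ⟨rfl, hj1, by omega⟩
    rw [he, Finset.card_image_of_injective _ (fun a b h => ((Prod.mk.injEq _ _ _ _).mp h).2),
      Nat.card_Icc]
    omega
  have hcard2 : (tau.cells \ mu.cells).card = P - (L - 1) := by
    have he : tau.cells \ mu.cells = (Finset.Icc (L - 1) (P - 1)).image (fun j => (r - 1, j)) := by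
      ext c
      rw [hB]
      simp only [Finset.mem_image, Finset.mem_Icc]
      constructor
      · rintro ⟨h1, h2, h3⟩
        exact ⟨c.2, ⟨h2, by omega⟩, by rw [← h1]⟩
      · rintro ⟨j, ⟨hj1, hj2⟩, rfl⟩
        exact ⟨rfl, hj1, by omega⟩
    rw [he, Finset.card_image_of_injective _ (fun a b h => ((Prod.mk.injEq _ _ _ _).mp h).2),
      Nat.card_Icc]
    omega
  have hmucard : mu.card + (P - (L - 1)) = tau.card := by
    have h1 := Finset.card_sdiff_of_subset (show mu.cells ⊆ tau.cells from hmusub)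
    have h2 : mu.cells.card ≤ tau.cells.card := Finset.card_le_card hmusub
    rw [hcard2] at h1
    show mu.cells.card + (P - (L - 1)) = tau.cells.card
    omega
  refine ⟨mu, hmusub, ⟨hmusub, ⟨r - 1, fun c hc => ((hB c).mp hc).1⟩, (r - 1, P - 1), ?_, ?_, ?_⟩,
    ?_, ?_⟩
  · rw [hB]
    refine ⟨rfl, ?_, ?_⟩
    · show L - 1 ≤ P - 1
      omega
    · show P - 1 < P
      omega
  · intro c hc
    have h := (hB c).mp hc
    show c.2 ≤ P - 1
    omega
  · show ((P - 1 : ℕ) : ℤ) - ((r - 1 : ℕ) : ℤ) = δ - (mu.card : ℤ)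
    omega
  · rw [hi2]
    intro c hc
    exact ((hB c).mp hc).1
  · refine ⟨(T : ℤ) - r, (P : ℤ) - r, by omega, ?_, ?_⟩
    · ext k
      simp only [Finset.mem_image, Finset.mem_Icc, hC, Finset.mem_union]
      constructor
      · rintro ⟨c, hc, rfl⟩
        rcases hc with h | h
        · have := (hA c).mp h
          omega
        · have := (hB c).mp h
          omega
      · rintro ⟨hk1, hk2⟩
        by_cases hcase : k ≤ (L : ℤ) - 1 - r
        · refine ⟨(r, (k + r).toNat), Or.inl ((hA _).mpr ⟨rfl, ?_, ?_⟩), ?_⟩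
          · show T ≤ (k + r).toNat
            omega
          · show (k + r).toNat < L
            omega
          · show (((k + r).toNat : ℕ) : ℤ) - ((r : ℕ) : ℤ) = k
            omega
        · refine ⟨(r - 1, (k + r - 1).toNat), Or.inr ((hB _).mpr ⟨rfl, ?_, ?_⟩), ?_⟩
          · show L - 1 ≤ (k + r - 1).toNat
            omega
          · show (k + r - 1).toNat < P
            omega
          · show (((k + r - 1).toNat : ℕ) : ℤ) - ((r - 1 : ℕ) : ℤ) = k
            omega
    · rw [hC, Finset.card_union_of_disjoint hdisj, hcard1, hcard2, Int.card_Icc]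
      omega
end

section
/- For any integer δ and partition τ, if there exist partitions λ and λ' with τ ⊂ λ, τ ⊂ λ', such that both (τ,λ) and (τ,λ') are δ-pairs, then λ = λ'. Similarly, if (μ,τ) and (μ',τ) are both δ-pairs with μ, μ' ⊂ τ, then μ = μ'. -/
/-- Uniqueness of addable-corner positions with a given content. -/
lemma deltaPair_corner_add (tau : YoungDiagram) {r c r' c' : ℕ}
    (h : (r, c) ∉ tau) (h' : (r', c') ∉ tau)
    (hup : 0 < r → (r - 1, c) ∈ tau) (hup' : 0 < r' → (r' - 1, c') ∈ tau)
    (hc : (c : ℤ) - r = (c' : ℤ) - r') : r = r' ∧ c = c' := by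
  rcases lt_trichotomy r r' with hlt | heq | hlt
  · exact absurd (tau.up_left_mem (by omega) (by omega) (hup' (by omega))) h
  · exact ⟨heq, by omega⟩
  · exact absurd (tau.up_left_mem (by omega) (by omega) (hup (by omega))) h'

/-- Uniqueness of removable-strip starting positions with a given content. -/
lemma deltaPair_corner_rem (tau : YoungDiagram) {r M r' M' : ℕ}
    (h : (r, M) ∈ tau) (hn : (r + 1, M) ∉ tau)
    (h' : (r', M') ∈ tau) (hn' : (r' + 1, M') ∉ tau)
    (hc : (M : ℤ) - 1 - r = (M' : ℤ) - 1 - r') : r = r' ∧ M = M' := by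
  rcases lt_trichotomy r r' with hlt | heq | hlt
  · exact absurd (tau.up_left_mem (by omega) (by omega) h') hn
  · exact ⟨heq, by omega⟩
  · exact absurd (tau.up_left_mem (by omega) (by omega) h) hn'

lemma deltaPair_extract_up {δ : ℤ} {tau lam : YoungDiagram} (h : IsDeltaPair δ tau lam) :
    ∃ r c : ℕ, (r, c) ∉ tau ∧ (0 < r → (r - 1, c) ∈ tau) ∧
      (c : ℤ) - r = δ - tau.card ∧
      ∀ x : ℕ × ℕ, x ∈ lam ↔ x ∈ tau ∨ (x.1 = r ∧ x.2 ≤ c) := by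
  obtain ⟨hle, ⟨r0, hrow⟩, b, hb, hmax, hcont⟩ := h
  have hbD := hb
  rw [Finset.mem_sdiff, YoungDiagram.mem_cells, YoungDiagram.mem_cells] at hbD
  obtain ⟨hblam, hbtau⟩ := hbD
  have hblam' : (b.1, b.2) ∈ lam := by rwa [Prod.mk.eta]
  refine ⟨b.1, b.2, by rwa [Prod.mk.eta], ?_, hcont, ?_⟩
  · intro hr
    have h1 : (b.1 - 1, b.2) ∈ lam := lam.up_left_mem (by omega) le_rfl hblam'
    by_contra hmem
    have h2 : ((b.1 - 1, b.2) : ℕ × ℕ) ∈ lam.cells \ tau.cells := by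
      rw [Finset.mem_sdiff, YoungDiagram.mem_cells, YoungDiagram.mem_cells]
      exact ⟨h1, hmem⟩
    have e1 := hrow _ h2
    have e2 := hrow _ hb
    simp only at e1
    omega
  · intro x
    constructor
    · intro hx
      by_cases hxt : x ∈ tau
      · exact Or.inl hxt
      · have hxD : x ∈ lam.cells \ tau.cells := by
          rw [Finset.mem_sdiff, YoungDiagram.mem_cells, YoungDiagram.mem_cells]
          exact ⟨hx, hxt⟩
        exact Or.inr ⟨(hrow _ hxD).trans (hrow _ hb).symm, hmax _ hxD⟩
    · rintro (hxt | ⟨h1, h2⟩)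
      · exact YoungDiagram.cells_subset_iff.2 hle hxt
      · have : (x.1, x.2) ∈ lam := lam.up_left_mem (le_of_eq h1) h2 hblam'
        rwa [Prod.mk.eta] at this
  
lemma deltaPair_extract_down {δ : ℤ} {mu tau : YoungDiagram} (h : IsDeltaPair δ mu tau) :
    ∃ r M : ℕ, (r, M) ∈ tau ∧ (r + 1, M) ∉ tau ∧
      (M : ℤ) - 1 - r = δ - tau.card ∧
      ∀ x : ℕ × ℕ, x ∈ mu ↔ x ∈ tau ∧ ¬(x.1 = r ∧ M ≤ x.2) := by
  obtain ⟨hle, ⟨r0, hrow⟩, b, hb, hmax, hcont⟩ := h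
  set D := tau.cells \ mu.cells with hD
  have memD : ∀ x : ℕ × ℕ, x ∈ D ↔ x ∈ tau ∧ x ∉ mu := by
    intro x
    rw [hD, Finset.mem_sdiff, YoungDiagram.mem_cells, YoungDiagram.mem_cells]
  have hbD := (memD b).1 hb
  have hbtau : (b.1, b.2) ∈ tau := by rw [Prod.mk.eta]; exact hbD.1
  have hbmu : (b.1, b.2) ∉ mu := by rw [Prod.mk.eta]; exact hbD.2
  have hrowb : ∀ x ∈ D, x.1 = b.1 := fun x hx => (hrow _ hx).trans (hrow _ hb).symm
  set S := D.image Prod.snd with hS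
  have hSne : S.Nonempty := ⟨b.2, Finset.mem_image_of_mem _ hb⟩
  set M := S.min' hSne with hM
  obtain ⟨x0, hx0D, hx0⟩ := Finset.mem_image.1 (S.min'_mem hSne)
  have hx0' : ((b.1, M) : ℕ × ℕ) ∈ D := by
    have h1 := hrowb _ hx0D
    rw [← h1, hM, ← hx0, Prod.mk.eta]; exact hx0D
  have hMle : M ≤ b.2 := S.min'_le _ (Finset.mem_image_of_mem _ hb)
  -- characterization of row b.1 of D
  have keyD : ∀ j : ℕ, ((b.1, j) : ℕ × ℕ) ∈ D ↔ M ≤ j ∧ j ≤ b.2 := by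
    intro j
    constructor
    · intro hj
      exact ⟨S.min'_le _ (Finset.mem_image_of_mem _ hj), hmax _ hj⟩
    · rintro ⟨h1, h2⟩
      rw [memD]
      refine ⟨tau.up_left_mem le_rfl h2 hbtau, fun hmem => ?_⟩
      exact ((memD _).1 hx0').2 (mu.up_left_mem le_rfl h1 hmem)
  -- corner facts
  have hMtau : ((b.1, M) : ℕ × ℕ) ∈ tau := ((memD _).1 hx0').1
  have hcorner : ((b.1 + 1, M) : ℕ × ℕ) ∉ tau := by
    intro hmem
    have hnotD : ((b.1 + 1, M) : ℕ × ℕ) ∉ D := fun hin => by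
      have := hrowb _ hin; simp only at this; omega
    have : ((b.1 + 1, M) : ℕ × ℕ) ∈ mu := by
      by_contra hc'
      exact hnotD ((memD _).2 ⟨hmem, hc'⟩)
    exact ((memD _).1 hx0').2 (mu.up_left_mem (by omega) le_rfl this)
  -- D equals an explicit interval
  have hDeq : D = (Finset.Icc M b.2).image (fun j => ((b.1, j) : ℕ × ℕ)) := by
    ext x
    rw [Finset.mem_image]
    constructor
    · intro hx
      have hx1 := hrowb _ hx
      have hx' : ((b.1, x.2) : ℕ × ℕ) ∈ D := by rwa [← hx1, Prod.mk.eta]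
      exact ⟨x.2, Finset.mem_Icc.2 ((keyD _).1 hx'), by rw [← hx1, Prod.mk.eta]⟩
    · rintro ⟨j, hj, rfl⟩
      exact (keyD j).2 (Finset.mem_Icc.1 hj)
  have hDcard : D.card = b.2 + 1 - M := by
    rw [hDeq, Finset.card_image_of_injective _ (fun a b h => by simpa using h),
      Nat.card_Icc]
  have hsub : mu.cells ⊆ tau.cells := YoungDiagram.cells_subset_iff.2 hle
  have hcard : D.card = tau.card - mu.card := Finset.card_sdiff_of_subset hsub
  have hcardle : mu.card ≤ tau.card := Finset.card_le_card hsub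
  refine ⟨b.1, M, hMtau, hcorner, by omega, ?_⟩
  -- membership characterization of mu
  have hc1 : ((b.1, b.2 + 1) : ℕ × ℕ) ∉ tau := by
    intro hmem
    have hnotD : ((b.1, b.2 + 1) : ℕ × ℕ) ∉ D := fun hin => by
      have := hmax _ hin; simp only at this; omega
    have hinmu : ((b.1, b.2 + 1) : ℕ × ℕ) ∈ mu := by
      by_contra hc'
      exact hnotD ((memD _).2 ⟨hmem, hc'⟩)
    exact hbmu (mu.up_left_mem le_rfl (by omega) hinmu)
  intro x
  constructor
  · intro hx
    refine ⟨YoungDiagram.cells_subset_iff.2 hle hx, ?_⟩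
    rintro ⟨h1, h2⟩
    by_cases hxc : x.2 ≤ b.2
    · have : ((b.1, x.2) : ℕ × ℕ) ∈ D := (keyD _).2 ⟨h2, hxc⟩
      have hxmu : ((b.1, x.2) : ℕ × ℕ) ∈ mu := by rwa [← h1, Prod.mk.eta]
      exact ((memD _).1 this).2 hxmu
    · have hxtau : (x.1, x.2) ∈ tau := by
        rw [Prod.mk.eta]; exact YoungDiagram.cells_subset_iff.2 hle hx
      exact hc1 (tau.up_left_mem (le_of_eq h1.symm) (by omega) hxtau)
  · rintro ⟨h1, h2⟩
    by_contra hxmu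
    have hxD : x ∈ D := (memD _).2 ⟨h1, hxmu⟩
    have hx1 := hrowb _ hxD
    have hx' : ((b.1, x.2) : ℕ × ℕ) ∈ D := by rwa [← hx1, Prod.mk.eta]
    exact h2 ⟨hx1, ((keyD _).1 hx').1⟩

/-- Uniqueness of `δ`-pairings: for a fixed partition `τ` and integer `δ`, if
`(τ,λ)` and `(τ,λ')` are both `δ`-pairs then `λ = λ'`; and if `(μ,τ)` and
`(μ',τ)` are both `δ`-pairs then `μ = μ'`. -/
theorem deltaPair_unique (δ : ℤ) (tau : YoungDiagram) :
    (∀ lam lam' : YoungDiagram,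
      IsDeltaPair δ tau lam → IsDeltaPair δ tau lam' → lam = lam') ∧
    (∀ mu mu' : YoungDiagram,
      IsDeltaPair δ mu tau → IsDeltaPair δ mu' tau → mu = mu') := by
  constructor
  · intro lam lam' h h'
    obtain ⟨r, c, hn, hup, hcont, hmem⟩ := deltaPair_extract_up h
    obtain ⟨r', c', hn', hup', hcont', hmem'⟩ := deltaPair_extract_up h'
    obtain ⟨hr, hc⟩ := deltaPair_corner_add tau hn hn' hup hup' (by omega)
    subst hr; subst hc
    exact SetLike.ext fun x => by rw [hmem x, hmem' x]
  · intro mu mu' h h'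
    obtain ⟨r, M, ht, hn, hcont, hmem⟩ := deltaPair_extract_down h
    obtain ⟨r', M', ht', hn', hcont', hmem'⟩ := deltaPair_extract_down h'
    obtain ⟨hr, hM⟩ := deltaPair_corner_rem tau ht hn ht' hn' (by omega)
    subst hr; subst hM
    exact SetLike.ext fun x => by rw [hmem x, hmem' x]
end
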